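/- arXiv:1802.05801 — 2 statements merged into one kernel-verified Lean document; each statement's English description precedes it below -/
import Mathlib

section
/- Let Σ₁, Σ₂ ∈ ℝ^{p×p} be symmetric with Λ(k; Σ₂) > 0, Γ₁, Γ₂ ∈ ℝ^p, and let k ≥ 1 be an integer such that k · |||Σ₁ − Σ₂|||_∞ < Λ(k; Σ₂). Then sup_{M∈𝓜(k)} ‖β_M(Σ₁, Γ₁) − β_M(Σ₂, Γ₂)‖₂ ≤ [k^{1/2} ‖Γ₁ − Γ₂‖_∞ + k · |||Σ₁ − Σ₂|||_∞ · S_{2,k}(Σ₂, Γ₂)] / [Λ(k; Σ₂) − k · |||Σ₁ − Σ₂|||_∞]. -/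
open scoped BigOperators
open MeasureTheory ProbabilityTheory Real Matrix

noncomputable section

/-- The Euclidean (`ℓ₂`) norm of a finitely indexed real vector. -/
def norm2 {ι : Type*} [Fintype ι] (v : ι → ℝ) : ℝ := Real.sqrt (∑ i, (v i) ^ 2)

/-- The `ℓ₁` norm of a finitely indexed real vector. -/
def norm1 {ι : Type*} [Fintype ι] (v : ι → ℝ) : ℝ := ∑ i, |v i|

/-- The `ℓ₂ → ℓ₂` operator norm of a square real matrix. -/
def opNorm {ι : Type*} [Fintype ι] (A : Matrix ι ι ℝ) : ℝ :=
  sSup {r | ∃ x : ι → ℝ, norm2 x ≤ 1 ∧ r = norm2 (A.mulVec x)}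

/-- The collection of models: nonempty subsets of `{1, …, p}` of cardinality at most `k`. -/
def Models (p k : ℕ) : Set (Finset (Fin p)) := {M | 1 ≤ M.card ∧ M.card ≤ k}

/-- The subvector of `v` with indices in the model `M`. -/
def subv {p : ℕ} (v : Fin p → ℝ) (M : Finset (Fin p)) : {x // x ∈ M} → ℝ := fun i => v i.1

/-- The submatrix of `A` with row and column indices in the model `M`. -/
def subm {p : ℕ} (A : Matrix (Fin p) (Fin p) ℝ) (M : Finset (Fin p)) :
    Matrix {x // x ∈ M} {x // x ∈ M} ℝ := fun i j => A i.1 j.1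

/-- `RIP(k, A)`: the maximal `k`-sparse operator norm `sup_{M ∈ 𝓜(k)} ‖A(M)‖_op`. -/
def RIP {p : ℕ} (k : ℕ) (A : Matrix (Fin p) (Fin p) ℝ) : ℝ :=
  ⨆ M : Models p k, opNorm (subm A M.1)

/-- `𝒟(k, v) = sup_{M ∈ 𝓜(k)} ‖v(M)‖₂`. -/
def Dnorm {p : ℕ} (k : ℕ) (v : Fin p → ℝ) : ℝ :=
  ⨆ M : Models p k, norm2 (subv v M.1)

/-- `θ` has at most `k` nonzero coordinates. -/
def sparse {p : ℕ} (k : ℕ) (θ : Fin p → ℝ) : Prop := Set.ncard {j | θ j ≠ 0} ≤ k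

/-- The minimal `k`-sparse eigenvalue
`Λ(k; A) = inf{θᵀAθ/‖θ‖₂² : θ ≠ 0, θ k-sparse}`. -/
def Lam {p : ℕ} (k : ℕ) (A : Matrix (Fin p) (Fin p) ℝ) : ℝ :=
  sInf {r | ∃ θ : Fin p → ℝ, θ ≠ 0 ∧ sparse k θ ∧ r = θ ⬝ᵥ A.mulVec θ / norm2 θ ^ 2}

/-- The linear regression map `β_M(Σ, Γ) = (Σ(M))⁻¹ Γ(M)`. -/
def betaM {p : ℕ} (M : Finset (Fin p)) (S : Matrix (Fin p) (Fin p) ℝ) (G : Fin p → ℝ) :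
    {x // x ∈ M} → ℝ := (subm S M)⁻¹.mulVec (subv G M)

/-- `S_{2,k}(Σ, Γ) = sup_{M ∈ 𝓜(k)} ‖β_M(Σ, Γ)‖₂`. -/
def S2k {p : ℕ} (k : ℕ) (S : Matrix (Fin p) (Fin p) ℝ) (G : Fin p → ℝ) : ℝ :=
  ⨆ M : Models p k, norm2 (betaM M.1 S G)

/-- `S_{1,k}(Σ, Γ) = sup_{M ∈ 𝓜(k)} ‖β_M(Σ, Γ)‖₁`. -/
def S1k {p : ℕ} (k : ℕ) (S : Matrix (Fin p) (Fin p) ℝ) (G : Fin p → ℝ) : ℝ :=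
  ⨆ M : Models p k, norm1 (betaM M.1 S G)

/-- The `k`-sparse Euclidean unit ball `Θ_k ⊆ ℝ^p`. -/
def Theta (p k : ℕ) : Set (Fin p → ℝ) := {θ | sparse k θ ∧ norm2 θ ≤ 1}

/-- The elementwise maximum norm `|||A|||_∞` of a matrix. -/
def normInfMat {p : ℕ} (A : Matrix (Fin p) (Fin p) ℝ) : ℝ :=
  ⨆ q : Fin p × Fin p, |A q.1 q.2|

/-- The supremum norm `‖v‖_∞` of a vector. -/
def normInfVec {p : ℕ} (v : Fin p → ℝ) : ℝ := ⨆ j, |v j|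

/-! On a model `M` with `|M| ≤ k`, extending vectors by zero shows that the quadratic form of
`Σ₂(M)` is at least `Λ(k; Σ₂)‖θ‖₂²`. An entrywise perturbation of size
`ε = |||Σ₁ − Σ₂|||_∞` moves the quadratic form by at most `ε‖θ‖₁² ≤ kε‖θ‖₂²`, so `Σ₁(M)` is
coercive with constant `c = Λ(k; Σ₂) − kε > 0`; hence it is invertible and, by Cauchy–Schwarz,
`c‖δ‖₂ ≤ ‖Σ₁(M)δ‖₂`. For `δ = β_M(Σ₁, Γ₁) − β_M(Σ₂, Γ₂)` one has
`Σ₁(M)δ = (Γ₁ − Γ₂)(M) + (Σ₂(M) − Σ₁(M)) β_M(Σ₂, Γ₂)`, and the two terms have norms at most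
`k^{1/2}‖Γ₁ − Γ₂‖_∞` and `kε S_{2,k}(Σ₂, Γ₂)`. -/

section Norms

variable {ι : Type*} [Fintype ι]

lemma norm2_eq_norm_toLp (v : ι → ℝ) : norm2 v = ‖WithLp.toLp 2 v‖ := by
  simp [norm2, EuclideanSpace.norm_eq]

lemma norm2_nonneg (v : ι → ℝ) : 0 ≤ norm2 v := Real.sqrt_nonneg _

lemma norm2_pos {v : ι → ℝ} (hv : v ≠ 0) : 0 < norm2 v := by
  rw [norm2_eq_norm_toLp, norm_pos_iff]
  simpa using hv

lemma norm2_add_le (u v : ι → ℝ) : norm2 (u + v) ≤ norm2 u + norm2 v := by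
  simpa only [norm2_eq_norm_toLp, WithLp.toLp_add] using norm_add_le _ _

lemma dotProduct_le_norm2_mul_norm2 (x y : ι → ℝ) : x ⬝ᵥ y ≤ norm2 x * norm2 y :=
  Real.sum_mul_le_sqrt_mul_sqrt _ x y

lemma norm1_nonneg (v : ι → ℝ) : 0 ≤ norm1 v := Finset.sum_nonneg fun _ _ => abs_nonneg _

lemma sq_norm1_le_card_mul_sq_norm2 (v : ι → ℝ) :
    norm1 v ^ 2 ≤ Fintype.card ι * norm2 v ^ 2 := by
  rw [norm2, Real.sq_sqrt (by positivity)]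
  simpa [norm1, sq_abs] using sq_sum_le_card_mul_sum_sq (s := Finset.univ) (f := fun i => |v i|)

lemma norm1_le_sqrt_card_mul_norm2 (v : ι → ℝ) :
    norm1 v ≤ √(Fintype.card ι) * norm2 v := by
  rw [← Real.sqrt_sq (norm2_nonneg v), ← Real.sqrt_mul (Nat.cast_nonneg _)]
  exact Real.le_sqrt_of_sq_le (sq_norm1_le_card_mul_sq_norm2 v)

lemma norm2_le_sqrt_card_mul {v : ι → ℝ} {c : ℝ} (hc : 0 ≤ c) (h : ∀ i, |v i| ≤ c) :
    norm2 v ≤ √(Fintype.card ι) * c := by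
  calc norm2 v ≤ √(∑ _i : ι, c ^ 2) := by
        refine Real.sqrt_le_sqrt (Finset.sum_le_sum fun i _ => ?_)
        rw [← sq_abs]
        exact pow_le_pow_left₀ (abs_nonneg _) (h i) 2
    _ = √(Fintype.card ι) * c := by
        rw [Finset.sum_const, Finset.card_univ, nsmul_eq_mul, Real.sqrt_mul (Nat.cast_nonneg _),
          Real.sqrt_sq hc]

section Entrywise

variable {B : Matrix ι ι ℝ} {ε : ℝ}

lemma abs_mulVec_apply_le (hB : ∀ i j, |B i j| ≤ ε) (x : ι → ℝ) (i : ι) :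
    |(B *ᵥ x) i| ≤ ε * norm1 x := by
  calc |(B *ᵥ x) i| ≤ ∑ j, |B i j * x j| := Finset.abs_sum_le_sum_abs _ _
    _ ≤ ∑ j, ε * |x j| := by
        refine Finset.sum_le_sum fun j _ => ?_
        rw [abs_mul]
        exact mul_le_mul_of_nonneg_right (hB i j) (abs_nonneg _)
    _ = ε * norm1 x := (Finset.mul_sum _ _ _).symm

lemma abs_dotProduct_mulVec_le (hB : ∀ i j, |B i j| ≤ ε) (x : ι → ℝ) :
    |x ⬝ᵥ B *ᵥ x| ≤ ε * norm1 x ^ 2 := by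
  calc |x ⬝ᵥ B *ᵥ x| ≤ ∑ i, |x i * (B *ᵥ x) i| := Finset.abs_sum_le_sum_abs _ _
    _ ≤ ∑ i, |x i| * (ε * norm1 x) := by
        refine Finset.sum_le_sum fun i _ => ?_
        rw [abs_mul]
        exact mul_le_mul_of_nonneg_left (abs_mulVec_apply_le hB x i) (abs_nonneg _)
    _ = ε * norm1 x ^ 2 := by rw [← Finset.sum_mul, ← norm1]; ring

lemma norm2_mulVec_le (hε : 0 ≤ ε) (hB : ∀ i j, |B i j| ≤ ε) (x : ι → ℝ) :
    norm2 (B *ᵥ x) ≤ Fintype.card ι * ε * norm2 x := by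
  have hcard := Real.mul_self_sqrt (Nat.cast_nonneg (α := ℝ) (Fintype.card ι))
  calc norm2 (B *ᵥ x) ≤ √(Fintype.card ι) * (ε * norm1 x) :=
        norm2_le_sqrt_card_mul (mul_nonneg hε (norm1_nonneg x)) (abs_mulVec_apply_le hB x)
    _ ≤ √(Fintype.card ι) * (ε * (√(Fintype.card ι) * norm2 x)) := by
        gcongr
        exact norm1_le_sqrt_card_mul_norm2 x
    _ = Fintype.card ι * ε * norm2 x := by linear_combination (ε * norm2 x) * hcard

end Entrywise

end Norms

section Coercive

variable {ι : Type*} [Fintype ι]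

def CoerciveWith (c : ℝ) (A : Matrix ι ι ℝ) : Prop :=
  ∀ x : ι → ℝ, c * norm2 x ^ 2 ≤ x ⬝ᵥ A *ᵥ x

variable {A A₁ A₂ : Matrix ι ι ℝ} {c : ℝ}

lemma CoerciveWith.mono {c' : ℝ} (h : CoerciveWith c A) (hc : c' ≤ c) : CoerciveWith c' A :=
  fun x => (mul_le_mul_of_nonneg_right hc (sq_nonneg _)).trans (h x)

lemma CoerciveWith.mul_norm2_le_norm2_mulVec (h : CoerciveWith c A) (x : ι → ℝ) :
    c * norm2 x ≤ norm2 (A *ᵥ x) := by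
  rcases (norm2_nonneg x).eq_or_lt with hx | hx
  · rw [← hx, mul_zero]
    exact norm2_nonneg _
  · refine le_of_mul_le_mul_right ?_ hx
    calc c * norm2 x * norm2 x = c * norm2 x ^ 2 := by ring
      _ ≤ x ⬝ᵥ A *ᵥ x := h x
      _ ≤ norm2 x * norm2 (A *ᵥ x) := dotProduct_le_norm2_mul_norm2 _ _
      _ = norm2 (A *ᵥ x) * norm2 x := mul_comm _ _

lemma CoerciveWith.isUnit_det [DecidableEq ι] (h : CoerciveWith c A) (hc : 0 < c) :
    IsUnit A.det := by
  refine isUnit_iff_ne_zero.2 fun hdet => ?_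
  obtain ⟨v, hv, hAv⟩ := Matrix.exists_mulVec_eq_zero_iff.2 hdet
  have hv' := h v
  rw [hAv, dotProduct_zero] at hv'
  exact (mul_pos hc (pow_pos (norm2_pos hv) 2)).not_ge hv'

lemma CoerciveWith.of_abs_sub_le {ε : ℝ} (h₂ : CoerciveWith c A₂) (hε : 0 ≤ ε)
    (hE : ∀ i j, |(A₁ - A₂) i j| ≤ ε) : CoerciveWith (c - Fintype.card ι * ε) A₁ := by
  intro x
  have hsplit : x ⬝ᵥ A₁ *ᵥ x = x ⬝ᵥ A₂ *ᵥ x + x ⬝ᵥ (A₁ - A₂) *ᵥ x := by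
    rw [← dotProduct_add, ← add_mulVec, add_sub_cancel]
  have hpert : ε * norm1 x ^ 2 ≤ Fintype.card ι * ε * norm2 x ^ 2 := by
    have := mul_le_mul_of_nonneg_left (sq_norm1_le_card_mul_sq_norm2 x) hε
    linarith
  have := neg_abs_le (x ⬝ᵥ (A₁ - A₂) *ᵥ x)
  have := abs_dotProduct_mulVec_le hE x
  have := h₂ x
  rw [hsplit]
  linarith

lemma mul_norm2_inv_mulVec_sub_le [DecidableEq ι] {ε : ℝ} (hc : 0 < c) (hε : 0 ≤ ε)
    (h₁ : CoerciveWith c A₁) (h₂ : IsUnit A₂.det) (hE : ∀ i j, |(A₁ - A₂) i j| ≤ ε)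
    (g₁ g₂ : ι → ℝ) :
    c * norm2 (A₁⁻¹ *ᵥ g₁ - A₂⁻¹ *ᵥ g₂) ≤
      norm2 (g₁ - g₂) + Fintype.card ι * ε * norm2 (A₂⁻¹ *ᵥ g₂) := by
  have hE' : ∀ i j, |(A₂ - A₁) i j| ≤ ε := fun i j => by
    simpa only [Matrix.sub_apply, abs_sub_comm] using hE i j
  have key : A₁ *ᵥ (A₁⁻¹ *ᵥ g₁ - A₂⁻¹ *ᵥ g₂) = (g₁ - g₂) + (A₂ - A₁) *ᵥ (A₂⁻¹ *ᵥ g₂) := by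
    have hA₁ : A₁ *ᵥ (A₁⁻¹ *ᵥ g₁) = g₁ := by
      rw [mulVec_mulVec, mul_nonsing_inv _ (h₁.isUnit_det hc), one_mulVec]
    have hA₂ : A₂ *ᵥ (A₂⁻¹ *ᵥ g₂) = g₂ := by rw [mulVec_mulVec, mul_nonsing_inv _ h₂, one_mulVec]
    rw [mulVec_sub, hA₁, sub_mulVec, hA₂]
    abel
  calc c * norm2 (A₁⁻¹ *ᵥ g₁ - A₂⁻¹ *ᵥ g₂) ≤ norm2 (A₁ *ᵥ (A₁⁻¹ *ᵥ g₁ - A₂⁻¹ *ᵥ g₂)) :=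
        h₁.mul_norm2_le_norm2_mulVec _
    _ ≤ norm2 (g₁ - g₂) + norm2 ((A₂ - A₁) *ᵥ (A₂⁻¹ *ᵥ g₂)) := key ▸ norm2_add_le _ _
    _ ≤ norm2 (g₁ - g₂) + Fintype.card ι * ε * norm2 (A₂⁻¹ *ᵥ g₂) := by
        gcongr
        exact norm2_mulVec_le hε hE' _

end Coercive

section Sparse

variable {p : ℕ}

def zeroExtend (M : Finset (Fin p)) (θ : M → ℝ) : Fin p → ℝ :=
  fun j => if h : j ∈ M then θ ⟨j, h⟩ else 0

lemma sum_zeroExtend (M : Finset (Fin p)) (θ : M → ℝ) (f : Fin p → ℝ → ℝ)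
    (hf : ∀ j, f j 0 = 0) : ∑ j, f j (zeroExtend M θ j) = ∑ i : M, f i (θ i) := by
  rw [← Finset.sum_subset (Finset.subset_univ M) fun j _ hj => by simp [zeroExtend, hj, hf],
    ← Finset.sum_coe_sort M]
  exact Finset.sum_congr rfl fun i _ => by simp [zeroExtend, i.2]

lemma zeroExtend_ne_zero (M : Finset (Fin p)) {θ : M → ℝ} (hθ : θ ≠ 0) :
    zeroExtend M θ ≠ 0 := by
  refine fun h => hθ (funext fun i => ?_)
  simpa [zeroExtend, i.2] using congrFun h i.1

lemma sparse_zeroExtend {k : ℕ} {M : Finset (Fin p)} (hM : M.card ≤ k) (θ : M → ℝ) :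
    sparse k (zeroExtend M θ) := by
  have hsupp : {j | zeroExtend M θ j ≠ 0} ⊆ (M : Set (Fin p)) := fun j hj => by
    by_contra hjM
    exact hj (dif_neg hjM)
  calc Set.ncard {j | zeroExtend M θ j ≠ 0} ≤ (M : Set (Fin p)).ncard :=
        Set.ncard_le_ncard hsupp M.finite_toSet
    _ = M.card := Set.ncard_coe_finset M
    _ ≤ k := hM

lemma norm2_zeroExtend (M : Finset (Fin p)) (θ : M → ℝ) : norm2 (zeroExtend M θ) = norm2 θ := by
  rw [norm2, sum_zeroExtend M θ (fun _ t => t ^ 2) fun _ => zero_pow two_ne_zero, norm2]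

lemma dotProduct_mulVec_zeroExtend (S : Matrix (Fin p) (Fin p) ℝ) (M : Finset (Fin p))
    (θ : M → ℝ) : zeroExtend M θ ⬝ᵥ S *ᵥ zeroExtend M θ = θ ⬝ᵥ subm S M *ᵥ θ := by
  simp only [dotProduct, mulVec]
  rw [sum_zeroExtend M θ (fun j t => t * ∑ l, S j l * zeroExtend M θ l) fun _ => zero_mul _]
  exact Finset.sum_congr rfl fun i _ => by
    rw [sum_zeroExtend M θ (fun l t => S i l * t) fun _ => mul_zero _]
    rfl

lemma coerciveWith_Lam_subm {k : ℕ} {S : Matrix (Fin p) (Fin p) ℝ} (hLam : 0 < Lam k S)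
    {M : Finset (Fin p)} (hM : M.card ≤ k) : CoerciveWith (Lam k S) (subm S M) := by
  intro θ
  rcases eq_or_ne θ 0 with rfl | hθ
  · simp [norm2]
  -- an unbounded-below set would have the junk infimum `0`
  have hbdd : BddBelow {r | ∃ θ : Fin p → ℝ, θ ≠ 0 ∧ sparse k θ ∧
      r = θ ⬝ᵥ S *ᵥ θ / norm2 θ ^ 2} := by
    by_contra h
    exact hLam.ne' (Real.sInf_of_not_bddBelow h)
  have hle : Lam k S ≤ θ ⬝ᵥ subm S M *ᵥ θ / norm2 θ ^ 2 :=
    csInf_le hbdd ⟨zeroExtend M θ, zeroExtend_ne_zero M hθ, sparse_zeroExtend hM θ,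
      by rw [dotProduct_mulVec_zeroExtend, norm2_zeroExtend]⟩
  exact (le_div_iff₀ (pow_pos (norm2_pos hθ) 2)).1 hle

lemma abs_apply_le_normInfMat (A : Matrix (Fin p) (Fin p) ℝ) (i j : Fin p) :
    |A i j| ≤ normInfMat A :=
  le_ciSup (f := fun q : Fin p × Fin p => |A q.1 q.2|) (Finite.bddAbove_range _) (i, j)

lemma abs_apply_le_normInfVec (v : Fin p → ℝ) (j : Fin p) : |v j| ≤ normInfVec v :=
  le_ciSup (f := fun j => |v j|) (Finite.bddAbove_range _) j

lemma normInfMat_nonneg (A : Matrix (Fin p) (Fin p) ℝ) : 0 ≤ normInfMat A :=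
  Real.iSup_nonneg fun _ => abs_nonneg _

lemma normInfVec_nonneg (v : Fin p → ℝ) : 0 ≤ normInfVec v :=
  Real.iSup_nonneg fun _ => abs_nonneg _

lemma norm2_betaM_le_S2k {k : ℕ} {M : Finset (Fin p)} (hM : M ∈ Models p k)
    (S : Matrix (Fin p) (Fin p) ℝ) (G : Fin p → ℝ) : norm2 (betaM M S G) ≤ S2k k S G :=
  le_ciSup (f := fun M : Models p k => norm2 (betaM M.1 S G)) (Finite.bddAbove_range _) ⟨M, hM⟩

lemma S2k_nonneg (k : ℕ) (S : Matrix (Fin p) (Fin p) ℝ) (G : Fin p → ℝ) : 0 ≤ S2k k S G :=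
  Real.iSup_nonneg fun _ => norm2_nonneg _

lemma mul_norm2_betaM_sub_le {k : ℕ} {Sig1 Sig2 : Matrix (Fin p) (Fin p) ℝ} (G1 G2 : Fin p → ℝ)
    (hRIP : (k : ℝ) * normInfMat (Sig1 - Sig2) < Lam k Sig2) {M : Finset (Fin p)}
    (hM : M ∈ Models p k) :
    (Lam k Sig2 - k * normInfMat (Sig1 - Sig2)) * norm2 (betaM M Sig1 G1 - betaM M Sig2 G2) ≤
      √k * normInfVec (G1 - G2) + k * normInfMat (Sig1 - Sig2) * S2k k Sig2 G2 := by
  set ε := normInfMat (Sig1 - Sig2)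
  have hε : 0 ≤ ε := normInfMat_nonneg _
  have hLam : 0 < Lam k Sig2 := (by positivity : (0 : ℝ) ≤ k * ε).trans_lt hRIP
  have hcard : (Fintype.card M : ℝ) ≤ k := by
    rw [Fintype.card_coe]
    exact_mod_cast hM.2
  have hE : ∀ i j, |(subm Sig1 M - subm Sig2 M) i j| ≤ ε :=
    fun i j => abs_apply_le_normInfMat (Sig1 - Sig2) i j
  have h₂ := coerciveWith_Lam_subm hLam hM.2
  have h₁ : CoerciveWith (Lam k Sig2 - k * ε) (subm Sig1 M) :=
    (h₂.of_abs_sub_le hε hE).mono (by gcongr)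
  calc (Lam k Sig2 - k * ε) * norm2 (betaM M Sig1 G1 - betaM M Sig2 G2)
      ≤ norm2 (subv (G1 - G2) M) + Fintype.card M * ε * norm2 (betaM M Sig2 G2) :=
        mul_norm2_inv_mulVec_sub_le (sub_pos.2 hRIP) hε h₁ (h₂.isUnit_det hLam) hE _ _
    _ ≤ √k * normInfVec (G1 - G2) + k * ε * S2k k Sig2 G2 := by
        refine add_le_add ?_ ?_
        · calc norm2 (subv (G1 - G2) M) ≤ √(Fintype.card M) * normInfVec (G1 - G2) :=
                norm2_le_sqrt_card_mul (normInfVec_nonneg _)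
                  fun i => abs_apply_le_normInfVec (G1 - G2) i
            _ ≤ √k * normInfVec (G1 - G2) := by
                gcongr
                exact normInfVec_nonneg _
        · exact mul_le_mul (by gcongr) (norm2_betaM_le_S2k hM Sig2 G2) (norm2_nonneg _)
            (by positivity)

end Sparse

theorem stmt3_general {p : ℕ} (k : ℕ)
    (Sig1 Sig2 : Matrix (Fin p) (Fin p) ℝ)
    (G1 G2 : Fin p → ℝ)
    (hRIP : (k : ℝ) * normInfMat (Sig1 - Sig2) < Lam k Sig2) :
    (⨆ M : Models p k, norm2 (betaM M.1 Sig1 G1 - betaM M.1 Sig2 G2)) ≤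
      (Real.sqrt k * normInfVec (G1 - G2)
          + (k : ℝ) * normInfMat (Sig1 - Sig2) * S2k k Sig2 G2) /
        (Lam k Sig2 - (k : ℝ) * normInfMat (Sig1 - Sig2)) := by
  have hc : 0 < Lam k Sig2 - k * normInfMat (Sig1 - Sig2) := sub_pos.2 hRIP
  have hnum : 0 ≤ √k * normInfVec (G1 - G2) + k * normInfMat (Sig1 - Sig2) * S2k k Sig2 G2 :=
    add_nonneg (mul_nonneg (Real.sqrt_nonneg _) (normInfVec_nonneg _))
      (mul_nonneg (mul_nonneg (Nat.cast_nonneg _) (normInfMat_nonneg _)) (S2k_nonneg _ _ _))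
  refine Real.iSup_le (fun M => ?_) (div_nonneg hnum hc.le)
  rw [le_div_iff₀ hc, mul_comm]
  exact mul_norm2_betaM_sub_le G1 G2 hRIP M.2

/-- Corollary of uniform `L₂`-consistency: if `k‖|Σ₁ − Σ₂|‖_∞ < Λ(k; Σ₂)` then
`sup_{M∈𝓜(k)} ‖β_M(Σ₁, Γ₁) − β_M(Σ₂, Γ₂)‖₂
  ≤ (k^{1/2}‖Γ₁ − Γ₂‖_∞ + k|||Σ₁ − Σ₂|||_∞ S_{2,k}(Σ₂, Γ₂)) / (Λ(k; Σ₂) − k|||Σ₁ − Σ₂|||_∞)`. -/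
theorem stmt3 {p : ℕ} (k : ℕ) (hk : 1 ≤ k)
    (Sig1 Sig2 : Matrix (Fin p) (Fin p) ℝ) (hS1 : Sig1.IsSymm) (hS2 : Sig2.IsSymm)
    (G1 G2 : Fin p → ℝ)
    (hLam : 0 < Lam k Sig2)
    (hRIP : (k : ℝ) * normInfMat (Sig1 - Sig2) < Lam k Sig2) :
    (⨆ M : Models p k, norm2 (betaM M.1 Sig1 G1 - betaM M.1 Sig2 G2)) ≤
      (Real.sqrt k * normInfVec (G1 - G2)
          + (k : ℝ) * normInfMat (Sig1 - Sig2) * S2k k Sig2 G2) /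
        (Lam k Sig2 - (k : ℝ) * normInfMat (Sig1 - Sig2)) :=
  stmt3_general k Sig1 Sig2 G1 G2 hRIP
end
end

section
/- (Uniform L₁-consistency) Let Σ₁, Σ₂ ∈ ℝ^{p×p} be symmetric matrices with Λ(k; Σ₂) > 0, let Γ₁, Γ₂ ∈ ℝ^p, and let k ≥ 1 be an integer such that RIP(k, Σ₁ − Σ₂) < Λ(k; Σ₂). Then simultaneously for all models M ∈ 𝓜(k), ‖β_M(Σ₁, Γ₁) − β_M(Σ₂, Γ₂)‖₁ ≤ |M|^{1/2} · [𝒟(k, Γ₁ − Γ₂) + RIP(k, Σ₁ − Σ₂) · ‖β_M(Σ₂, Γ₂)‖₂] / [Λ(k; Σ₂) − RIP(k, Σ₁ − Σ₂)]. -/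
open scoped BigOperators
open MeasureTheory ProbabilityTheory Real Matrix

noncomputable section

section Aux

variable {ι : Type*} [Fintype ι]

lemma sq_norm2 (v : ι → ℝ) : norm2 v ^ 2 = ∑ i, v i ^ 2 :=
  Real.sq_sqrt (by positivity)

lemma norm2_eq_zero_iff {v : ι → ℝ} : norm2 v = 0 ↔ v = 0 := by
  constructor
  · intro h
    have h2 : ∑ i, v i ^ 2 = 0 := by rw [← sq_norm2 v, h]; ring
    funext i
    have := (Finset.sum_eq_zero_iff_of_nonneg (fun i _ => sq_nonneg (v i))).mp h2 i
      (Finset.mem_univ i)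
    exact pow_eq_zero_iff two_ne_zero |>.mp this
  · rintro rfl; simp [norm2]

lemma norm2_pos_of_ne_zero {v : ι → ℝ} (h : v ≠ 0) : 0 < norm2 v :=
  lt_of_le_of_ne (norm2_nonneg v) (fun h' => h (norm2_eq_zero_iff.mp h'.symm))

lemma abs_le_norm2 (v : ι → ℝ) (i : ι) : |v i| ≤ norm2 v := by
  rw [norm2, ← Real.sqrt_sq_eq_abs]
  exact Real.sqrt_le_sqrt (Finset.single_le_sum (f := fun i => v i ^ 2)
    (fun i _ => sq_nonneg (v i)) (Finset.mem_univ i))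

lemma dot_le_norm2 (v w : ι → ℝ) : v ⬝ᵥ w ≤ norm2 v * norm2 w := by
  simpa [norm2, dotProduct] using Real.sum_mul_le_sqrt_mul_sqrt Finset.univ v w

lemma neg_norm2_le_dot (v w : ι → ℝ) : -(norm2 v * norm2 w) ≤ v ⬝ᵥ w := by
  have := dot_le_norm2 (-v) w
  rw [neg_dotProduct] at this
  have hn : norm2 (-v) = norm2 v := by simp [norm2]
  linarith [this, hn ▸ this]

lemma norm1_le_sqrt_card_mul (v : ι → ℝ) :
    norm1 v ≤ Real.sqrt (Fintype.card ι) * norm2 v := by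
  have := Real.sum_mul_le_sqrt_mul_sqrt Finset.univ (fun _ => (1 : ℝ)) (fun i => |v i|)
  simpa [norm1, norm2, sq_abs, Finset.card_univ] using this

lemma norm2_smul (c : ℝ) (v : ι → ℝ) : norm2 (c • v) = |c| * norm2 v := by
  simp only [norm2, Pi.smul_apply, smul_eq_mul, mul_pow, ← Finset.mul_sum]
  rw [Real.sqrt_mul (sq_nonneg c), Real.sqrt_sq_eq_abs]

lemma norm2_sub_le (u v : ι → ℝ) : norm2 (u - v) ≤ norm2 u + norm2 v := by
  have := norm2_add_le u (-v)
  have hn : norm2 (-v) = norm2 v := by simp [norm2]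
  simpa [sub_eq_add_neg, hn] using this

lemma opNorm_bddAbove (A : Matrix ι ι ℝ) :
    BddAbove {r | ∃ x : ι → ℝ, norm2 x ≤ 1 ∧ r = norm2 (A.mulVec x)} := by
  refine ⟨Real.sqrt (∑ i, ∑ j, A i j ^ 2), ?_⟩
  rintro r ⟨x, hx, rfl⟩
  rw [norm2]
  apply Real.sqrt_le_sqrt
  have hx2 : ∑ j, x j ^ 2 ≤ 1 := by
    have := sq_norm2 x
    nlinarith [norm2_nonneg x]
  calc ∑ i, (A.mulVec x i) ^ 2
      ≤ ∑ i, (∑ j, A i j ^ 2) * (∑ j, x j ^ 2) := by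
        apply Finset.sum_le_sum
        intro i _
        exact Finset.sum_mul_sq_le_sq_mul_sq Finset.univ (fun j => A i j) x
    _ ≤ ∑ i, ∑ j, A i j ^ 2 := by
        apply Finset.sum_le_sum
        intro i _
        have h0 : (0:ℝ) ≤ ∑ j, A i j ^ 2 := by positivity
        nlinarith

lemma opNorm_nonneg (A : Matrix ι ι ℝ) : 0 ≤ opNorm A := by
  apply le_csSup (opNorm_bddAbove A)
  exact ⟨0, by simp [norm2], by simp [norm2]⟩

lemma norm2_mulVec_le_s5 (A : Matrix ι ι ℝ) (x : ι → ℝ) :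
    norm2 (A.mulVec x) ≤ opNorm A * norm2 x := by
  rcases eq_or_ne x 0 with rfl | hx
  · simp [norm2, Matrix.mulVec_zero]
  · have hpos := norm2_pos_of_ne_zero hx
    set c := (norm2 x)⁻¹ with hc
    have hcpos : 0 < c := inv_pos.mpr hpos
    have hy : norm2 (c • x) = 1 := by
      rw [norm2_smul, abs_of_pos hcpos, hc, inv_mul_cancel₀ (ne_of_gt hpos)]
    have hmem : norm2 (A.mulVec (c • x)) ∈
        {r | ∃ x : ι → ℝ, norm2 x ≤ 1 ∧ r = norm2 (A.mulVec x)} :=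
      ⟨c • x, le_of_eq hy, rfl⟩
    have hle := le_csSup (opNorm_bddAbove A) hmem
    rw [Matrix.mulVec_smul, norm2_smul, abs_of_pos hcpos] at hle
    rw [hc] at hle
    calc norm2 (A.mulVec x) = norm2 x * ((norm2 x)⁻¹ * norm2 (A.mulVec x)) := by
          field_simp
      _ ≤ norm2 x * opNorm A := by
          apply mul_le_mul_of_nonneg_left hle (le_of_lt hpos)
      _ = opNorm A * norm2 x := mul_comm _ _

end Aux

section Aux2

/-- Extension of a vector on a model to `Fin p`. -/
def extv {p : ℕ} (M : Finset (Fin p)) (x : {j // j ∈ M} → ℝ) : Fin p → ℝ :=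
  fun j => if h : j ∈ M then x ⟨j, h⟩ else 0

lemma sum_univ_eq_sum_subtype {p : ℕ} (M : Finset (Fin p)) (f : Fin p → ℝ)
    (h0 : ∀ j ∉ M, f j = 0) : ∑ j, f j = ∑ i : {j // j ∈ M}, f i.1 := by
  rw [Finset.sum_coe_sort M f]
  exact (Finset.sum_subset (Finset.subset_univ M) (fun j _ hj => h0 j hj)).symm

lemma extv_sq_sum {p : ℕ} (M : Finset (Fin p)) (x : {j // j ∈ M} → ℝ) :
    ∑ j, extv M x j ^ 2 = ∑ i, x i ^ 2 := by
  rw [sum_univ_eq_sum_subtype M _ (fun j hj => by simp [extv, hj])]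
  exact Finset.sum_congr rfl (fun i _ => by simp [extv, i.2])

lemma extv_norm2 {p : ℕ} (M : Finset (Fin p)) (x : {j // j ∈ M} → ℝ) :
    norm2 (extv M x) = norm2 x := by
  rw [norm2, norm2, extv_sq_sum]

lemma extv_ne_zero {p : ℕ} (M : Finset (Fin p)) {x : {j // j ∈ M} → ℝ} (hx : x ≠ 0) :
    extv M x ≠ 0 := by
  intro h
  apply hx
  funext i
  have := congrFun h i.1
  simpa [extv, i.2] using this

lemma extv_sparse {p k : ℕ} (M : Finset (Fin p)) (hM : M.card ≤ k) (x : {j // j ∈ M} → ℝ) :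
    sparse k (extv M x) := by
  unfold sparse
  have hsub : {j | extv M x j ≠ 0} ⊆ (M : Set (Fin p)) := by
    intro j hj
    by_contra hjm
    rw [Finset.mem_coe] at hjm
    exact hj (by simp [extv, hjm])
  calc Set.ncard {j | extv M x j ≠ 0} ≤ Set.ncard (M : Set (Fin p)) :=
        Set.ncard_le_ncard hsub M.finite_toSet
    _ = M.card := Set.ncard_coe_finset M
    _ ≤ k := hM

lemma extv_dot {p : ℕ} (A : Matrix (Fin p) (Fin p) ℝ) (M : Finset (Fin p))
    (x : {j // j ∈ M} → ℝ) :
    extv M x ⬝ᵥ A.mulVec (extv M x) = x ⬝ᵥ (subm A M).mulVec x := by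
  rw [dotProduct, dotProduct,
    sum_univ_eq_sum_subtype M _ (fun j hj => by simp [extv, hj])]
  apply Finset.sum_congr rfl
  intro i _
  have h1 : extv M x i.1 = x i := by simp [extv, i.2]
  have h2 : A.mulVec (extv M x) i.1 = (subm A M).mulVec x i := by
    rw [Matrix.mulVec, Matrix.mulVec]
    show A i.1 ⬝ᵥ extv M x = subm A M i ⬝ᵥ x
    rw [dotProduct, dotProduct,
      sum_univ_eq_sum_subtype M _ (fun l hl => by simp [extv, hl])]
    exact Finset.sum_congr rfl (fun l _ => by simp [extv, subm, l.2])
  rw [h1, h2]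

lemma isUnit_of_posdef {ι : Type*} [Fintype ι] [DecidableEq ι] {A : Matrix ι ι ℝ} {c : ℝ}
    (hc : 0 < c) (h : ∀ x : ι → ℝ, c * norm2 x ^ 2 ≤ x ⬝ᵥ A.mulVec x) : IsUnit A := by
  rw [← Matrix.mulVec_injective_iff_isUnit]
  intro x y hxy
  by_contra hne
  have hs : x - y ≠ 0 := sub_ne_zero.mpr hne
  have h0 : A.mulVec (x - y) = 0 := by rw [Matrix.mulVec_sub, hxy, sub_self]
  have h1 := h (x - y)
  rw [h0, dotProduct_zero] at h1
  have h2 := pow_pos (norm2_pos_of_ne_zero hs) 2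
  nlinarith

end Aux2


/-- Uniform `L₁`-consistency: if `RIP(k, Σ₁ − Σ₂) < Λ(k; Σ₂)` then
simultaneously for all `M ∈ 𝓜(k)`,
`‖β_M(Σ₁, Γ₁) − β_M(Σ₂, Γ₂)‖₁
  ≤ |M|^{1/2} (𝒟(k, Γ₁ − Γ₂) + RIP(k, Σ₁ − Σ₂)‖β_M(Σ₂, Γ₂)‖₂) / (Λ(k; Σ₂) − RIP(k, Σ₁ − Σ₂))`. -/
theorem stmt5 {p : ℕ} (k : ℕ) (hk : 1 ≤ k)
    (Sig1 Sig2 : Matrix (Fin p) (Fin p) ℝ) (hS1 : Sig1.IsSymm) (hS2 : Sig2.IsSymm)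
    (G1 G2 : Fin p → ℝ)
    (hLam : 0 < Lam k Sig2)
    (hRIP : RIP k (Sig1 - Sig2) < Lam k Sig2) :
    ∀ M ∈ Models p k,
      norm1 (betaM M Sig1 G1 - betaM M Sig2 G2) ≤
        Real.sqrt M.card *
          ((Dnorm k (G1 - G2) + RIP k (Sig1 - Sig2) * norm2 (betaM M Sig2 G2)) /
            (Lam k Sig2 - RIP k (Sig1 - Sig2))) := by
  intro M hM
  classical
  have hLR : 0 < Lam k Sig2 - RIP k (Sig1 - Sig2) := sub_pos.mpr hRIP
  set R := RIP k (Sig1 - Sig2) with hRdef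
  set L := Lam k Sig2 with hLdef
  set A := subm Sig2 M with hA
  set A' := subm Sig1 M with hA'
  set D := subm (Sig1 - Sig2) M with hDdef
  have hAD : A' = A + D := by
    funext i j
    simp only [hA, hA', hDdef, subm, Matrix.add_apply, Matrix.sub_apply]
    ring
  -- RIP bound
  have hbdd : BddAbove (Set.range fun N : Models p k => opNorm (subm (Sig1 - Sig2) N.1)) :=
    Set.Finite.bddAbove (Set.finite_range _)
  have hopD : opNorm D ≤ R := le_ciSup hbdd (⟨M, hM⟩ : Models p k)
  have hR0 : 0 ≤ R := (opNorm_nonneg D).trans hopD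
  have hDx : ∀ x : {j // j ∈ M} → ℝ, norm2 (D.mulVec x) ≤ R * norm2 x := fun x =>
    (norm2_mulVec_le_s5 D x).trans (mul_le_mul_of_nonneg_right hopD (norm2_nonneg x))
  -- Dnorm bound
  have hbdd2 : BddAbove (Set.range fun N : Models p k => norm2 (subv (G1 - G2) N.1)) :=
    Set.Finite.bddAbove (Set.finite_range _)
  have hDn : norm2 (subv (G1 - G2) M) ≤ Dnorm k (G1 - G2) :=
    le_ciSup hbdd2 (⟨M, hM⟩ : Models p k)
  have hDn0 : 0 ≤ Dnorm k (G1 - G2) := (norm2_nonneg _).trans hDn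
  -- Lam set bounded below
  have hbb : BddBelow {r | ∃ θ : Fin p → ℝ, θ ≠ 0 ∧ sparse k θ ∧
      r = θ ⬝ᵥ Sig2.mulVec θ / norm2 θ ^ 2} := by
    refine ⟨-(∑ i, ∑ j, |Sig2 i j|), ?_⟩
    rintro r ⟨θ, hθ, -, rfl⟩
    have hpos : 0 < norm2 θ ^ 2 := pow_pos (norm2_pos_of_ne_zero hθ) 2
    rw [le_div_iff₀ hpos]
    have expand : θ ⬝ᵥ Sig2.mulVec θ = ∑ i, ∑ j, θ i * (Sig2 i j * θ j) := by
      simp [dotProduct, Matrix.mulVec, Finset.mul_sum]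
    have hbound : ∀ i j : Fin p, -(|Sig2 i j| * norm2 θ ^ 2) ≤ θ i * (Sig2 i j * θ j) := by
      intro i j
      have h1 : |θ i * (Sig2 i j * θ j)| ≤ |Sig2 i j| * (norm2 θ * norm2 θ) := by
        rw [abs_mul, abs_mul]
        calc |θ i| * (|Sig2 i j| * |θ j|) = |Sig2 i j| * (|θ i| * |θ j|) := by ring
          _ ≤ |Sig2 i j| * (norm2 θ * norm2 θ) :=
            mul_le_mul_of_nonneg_left
              (mul_le_mul (abs_le_norm2 θ i) (abs_le_norm2 θ j) (abs_nonneg _)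
                (norm2_nonneg θ)) (abs_nonneg _)
      have h2 := neg_abs_le (θ i * (Sig2 i j * θ j))
      have hn2 : norm2 θ ^ 2 = norm2 θ * norm2 θ := by ring
      linarith [hn2 ▸ h1]
    have hrw : -(∑ i, ∑ j, |Sig2 i j|) * norm2 θ ^ 2
        = ∑ i, ∑ j, -(|Sig2 i j| * norm2 θ ^ 2) := by
      rw [neg_mul, Finset.sum_mul, ← Finset.sum_neg_distrib]
      exact Finset.sum_congr rfl fun i _ => by
        rw [Finset.sum_mul, ← Finset.sum_neg_distrib]
    rw [expand, hrw]
    exact Finset.sum_le_sum fun i _ => Finset.sum_le_sum fun j _ => hbound i j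
  -- Rayleigh lower bound for A
  have hRay : ∀ x : {j // j ∈ M} → ℝ, L * norm2 x ^ 2 ≤ x ⬝ᵥ A.mulVec x := by
    intro x
    rcases eq_or_ne x 0 with rfl | hx
    · simp [norm2, Matrix.mulVec_zero]
    · have hθ := extv_ne_zero M hx
      have hlam_le : L ≤ extv M x ⬝ᵥ Sig2.mulVec (extv M x) / norm2 (extv M x) ^ 2 := by
        rw [hLdef]
        exact csInf_le hbb ⟨extv M x, hθ, extv_sparse M hM.2 x, rfl⟩
      rw [extv_dot, extv_norm2, ← hA] at hlam_le
      have hpos : 0 < norm2 x ^ 2 := pow_pos (norm2_pos_of_ne_zero hx) 2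
      calc L * norm2 x ^ 2 ≤ (x ⬝ᵥ A.mulVec x / norm2 x ^ 2) * norm2 x ^ 2 :=
            mul_le_mul_of_nonneg_right hlam_le hpos.le
        _ = x ⬝ᵥ A.mulVec x := div_mul_cancel₀ _ (ne_of_gt hpos)
  have hL0 : 0 < L := hLam
  -- lower bound for A'
  have hA'lb : ∀ x : {j // j ∈ M} → ℝ, (L - R) * norm2 x ^ 2 ≤ x ⬝ᵥ A'.mulVec x := by
    intro x
    have h1 := hRay x
    have h2 : -(norm2 x * norm2 (D.mulVec x)) ≤ x ⬝ᵥ D.mulVec x := neg_norm2_le_dot x _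
    have h3 : norm2 x * norm2 (D.mulVec x) ≤ norm2 x * (R * norm2 x) :=
      mul_le_mul_of_nonneg_left (hDx x) (norm2_nonneg x)
    have h4 : x ⬝ᵥ A'.mulVec x = x ⬝ᵥ A.mulVec x + x ⬝ᵥ D.mulVec x := by
      rw [hAD, Matrix.add_mulVec, dotProduct_add]
    have hn2 : norm2 x ^ 2 = norm2 x * norm2 x := by ring
    nlinarith
  -- invertibility
  have hAunit : IsUnit A := isUnit_of_posdef hL0 hRay
  have hA'unit : IsUnit A' := isUnit_of_posdef hLR hA'lb
  set β₁ := betaM M Sig1 G1 with hb1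
  set β₂ := betaM M Sig2 G2 with hb2
  have hAβ2 : A.mulVec β₂ = subv G2 M := by
    rw [hb2]
    unfold betaM
    rw [← hA, Matrix.mulVec_mulVec,
      Matrix.mul_nonsing_inv _ ((Matrix.isUnit_iff_isUnit_det A).mp hAunit),
      Matrix.one_mulVec]
  have hA'β1 : A'.mulVec β₁ = subv G1 M := by
    rw [hb1]
    unfold betaM
    rw [← hA', Matrix.mulVec_mulVec,
      Matrix.mul_nonsing_inv _ ((Matrix.isUnit_iff_isUnit_det A').mp hA'unit),
      Matrix.one_mulVec]
  set δ := β₁ - β₂ with hδ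
  have hA'δ : A'.mulVec δ = subv (G1 - G2) M - D.mulVec β₂ := by
    have t1 : subv (G1 - G2) M = subv G1 M - subv G2 M := by
      funext i; simp [subv]
    rw [hδ, Matrix.mulVec_sub, hA'β1, t1, hAD, Matrix.add_mulVec, hAβ2]
    abel
  have hw : norm2 (A'.mulVec δ) ≤ Dnorm k (G1 - G2) + R * norm2 β₂ := by
    rw [hA'δ]
    calc norm2 (subv (G1 - G2) M - D.mulVec β₂)
        ≤ norm2 (subv (G1 - G2) M) + norm2 (D.mulVec β₂) := norm2_sub_le _ _
      _ ≤ Dnorm k (G1 - G2) + R * norm2 β₂ := add_le_add hDn (hDx β₂)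
  have hδle : norm2 δ ≤ (Dnorm k (G1 - G2) + R * norm2 β₂) / (L - R) := by
    rcases eq_or_lt_of_le (norm2_nonneg δ) with h0 | hpos
    · rw [← h0]
      exact div_nonneg (add_nonneg hDn0 (mul_nonneg hR0 (norm2_nonneg _))) hLR.le
    · rw [le_div_iff₀ hLR]
      have hkey := (hA'lb δ).trans (dot_le_norm2 δ (A'.mulVec δ))
      have hstep : (L - R) * norm2 δ ≤ norm2 (A'.mulVec δ) := by
        have hn2 : norm2 δ ^ 2 = norm2 δ * norm2 δ := by ring
        nlinarith
      nlinarith [hstep.trans hw]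
  calc norm1 δ ≤ Real.sqrt (Fintype.card {j // j ∈ M}) * norm2 δ := norm1_le_sqrt_card_mul δ
    _ = Real.sqrt M.card * norm2 δ := by rw [Fintype.card_coe]
    _ ≤ Real.sqrt M.card * ((Dnorm k (G1 - G2) + R * norm2 β₂) / (L - R)) :=
        mul_le_mul_of_nonneg_left hδle (Real.sqrt_nonneg _)
end
end
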